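/- Let μ be a finite positive Borel measure on the unit circle ∂𝔻 and let n be a nonnegative integer. There exists a constant C > 0, depending only on n (independent of μ), such that for every analytic function f on 𝔻, ∫_𝔻 |f^{(n+1)}(z)|² (1−|z|²)^{2n} P_μ(z) dA(z) ≤ C ∫_𝔻 |f'(z)|² P_μ(z) dA(z). -/

import Mathlib

/-!
Induction on `n`: one step trades a derivative for a factor `(1 - |z|²)²`. For `h` holomorphic
and `R = (1 - |z|) / 2`, Cauchy's formula on the circles of radius `r < R` about `z`, squared by
Jensen and integrated in polar coordinates, gives `|h'(z)|² R⁴ ≤ (2/π) ∫_{D(z,R)} |h|²`. On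
`D(z,R)` the factor `1 - |w|²` is comparable to `R`, and by Harnack's inequality `P_μ(w)` is
comparable to `P_μ(z)`. Integrating in `z` and exchanging the order of integration, each `w` is
charged only by discs `D(z,R)` of area comparable to `(1 - |w|)²`, which yields
`∫ |h'|² (1 - |z|²)^(2m+2) P_μ ≤ 2592 · 16^m ∫ |h|² (1 - |z|²)^(2m) P_μ`.
-/

open MeasureTheory

noncomputable section

/-- The Poisson integral `P_μ(z) = (1/2π) ∫_{∂𝔻} (1-|z|²)/|ζ-z|² dμ(ζ)` of a measure `μ`
on the unit circle. -/
def poissonInt (μ : Measure ℂ) (z : ℂ) : ℝ :=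
  (2 * Real.pi)⁻¹ * ∫ ζ, (1 - ‖z‖ ^ 2) / ‖ζ - z‖ ^ 2 ∂μ

open Metric Set Real
open scoped ENNReal

theorem norm_circleAverage_le {E : Type*} [NormedAddCommGroup E] [NormedSpace ℝ E]
    (f : ℂ → E) (c : ℂ) (R : ℝ) :
    ‖circleAverage f c R‖ ≤ circleAverage (fun z => ‖f z‖) c R := by
  rw [circleAverage_def, circleAverage_def, norm_smul, smul_eq_mul,
    Real.norm_of_nonneg (by positivity)]
  gcongr
  exact intervalIntegral.norm_integral_le_integral_norm (by positivity)

theorem sq_circleAverage_le {f : ℂ → ℝ} {c : ℂ} {R : ℝ} (hf : CircleIntegrable f c R)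
    (hf_sq : CircleIntegrable (fun z => f z ^ 2) c R) :
    circleAverage f c R ^ 2 ≤ circleAverage (fun z => f z ^ 2) c R := by
  simp only [circleAverage_eq_intervalAverage]
  have hpos : (0 : ℝ) ≤ 2 * π := by positivity
  refine (even_two.convexOn_pow).map_set_average_le (continuous_pow 2).continuousOn isClosed_univ
    ?_ ?_ (ae_of_all _ fun _ => mem_univ _) ?_ ?_
  · simp [uIoc_of_le hpos, Real.pi_pos]
  · simp [uIoc_of_le hpos, ENNReal.mul_eq_top]
  · exact hf.def'
  · exact hf_sq.def'

theorem DifferentiableOn.deriv_eq_circleAverage {h : ℂ → ℂ} {c : ℂ} {r : ℝ} (hr : 0 < r)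
    (hd : DifferentiableOn ℂ h (closedBall c r)) :
    _root_.deriv h c = circleAverage (fun w => (w - c)⁻¹ • h w) c r := by
  rw [circleAverage_eq_circleIntegral hr.ne']
  have hcauchy := hd.deriv_eq_smul_circleIntegral hr
  simp_rw [smul_smul, ← mul_inv, ← sq, ← one_div, hcauchy]
  rw [smul_smul, one_div, inv_mul_cancel₀ Complex.two_pi_I_ne_zero, one_smul]

theorem sq_mul_norm_deriv_le_circleAverage {h : ℂ → ℂ} {c : ℂ} {r : ℝ} (hr : 0 < r)
    (hd : DifferentiableOn ℂ h (closedBall c r)) :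
    (r * ‖deriv h c‖) ^ 2 ≤ circleAverage (fun w => ‖h w‖ ^ 2) c r := by
  have hcont : ContinuousOn (fun w => ‖h w‖) (sphere c |r|) :=
    (hd.continuousOn.mono (by rw [abs_of_pos hr]; exact sphere_subset_closedBall)).norm
  have hbound : r * ‖deriv h c‖ ≤ circleAverage (fun w => ‖h w‖) c r := by
    rw [hd.deriv_eq_circleAverage hr, ← le_div_iff₀' hr, div_eq_inv_mul, ← smul_eq_mul,
      ← circleAverage_smul]
    refine (norm_circleAverage_le _ _ _).trans_eq (circleAverage_congr_sphere fun w hw => ?_)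
    rw [abs_of_pos hr, mem_sphere, dist_eq_norm] at hw
    simp [hw]
  calc (r * ‖deriv h c‖) ^ 2 ≤ circleAverage (fun w => ‖h w‖) c r ^ 2 :=
        pow_le_pow_left₀ (by positivity) hbound 2
    _ ≤ _ := sq_circleAverage_le hcont.circleIntegrable' (hcont.pow 2).circleIntegrable'

theorem circleMap_eq_add_polarCoord_symm (c : ℂ) (r θ : ℝ) :
    circleMap c r θ = c + Complex.polarCoord.symm (r, θ) := by
  simp [circleMap, Complex.polarCoord_symm_apply, Complex.exp_mul_I, ← Complex.ofReal_cos,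
    ← Complex.ofReal_sin]

theorem circleAverage_eq_setIntegral_polarCoord_symm (g : ℂ → ℝ) (c : ℂ) (r : ℝ) :
    circleAverage g c r
      = (2 * π)⁻¹ * ∫ θ in Ioo (-π) π, g (c + Complex.polarCoord.symm (r, θ)) := by
  have hper : Function.Periodic (fun θ => g (circleMap c r θ)) (2 * π) :=
    fun θ => by simp [periodic_circleMap c r θ]
  have hshift := hper.intervalIntegral_add_eq 0 (-π)
  rw [zero_add, show -π + 2 * π = π by ring] at hshift
  rw [circleAverage_def, smul_eq_mul, ← integral_Ioc_eq_integral_Ioo,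
    ← intervalIntegral.integral_of_le (by linarith [pi_pos]), hshift]
  simp only [circleMap_eq_add_polarCoord_symm]

theorem Complex.continuous_polarCoord_symm : Continuous Complex.polarCoord.symm := by
  simp_rw [funext Complex.polarCoord_symm_apply]
  fun_prop

theorem lintegral_ball_eq_setLIntegral_polarCoord (F : ℂ → ℝ≥0∞) (c : ℂ) (R : ℝ) :
    ∫⁻ w in ball c R, F w
      = ∫⁻ p in Ioo 0 R ×ˢ Ioo (-π) π, ENNReal.ofReal p.1 * F (c + Complex.polarCoord.symm p) := by
  rw [← lintegral_indicator measurableSet_ball, ← lintegral_add_left_eq_self _ c,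
    ← Complex.lintegral_comp_polarCoord_symm, polarCoord_target,
    ← inter_eq_left.2 (prod_mono Ioo_subset_Ioi_self Subset.rfl),
    ← setLIntegral_indicator (measurableSet_Ioo.prod measurableSet_Ioo)]
  refine setLIntegral_congr_fun (measurableSet_Ioi.prod measurableSet_Ioo) fun p hp => ?_
  have hmem : c + Complex.polarCoord.symm p ∈ ball c R ↔ p ∈ Ioo 0 R ×ˢ Ioo (-π) π := by
    simp [abs_of_pos (mem_Ioi.1 hp.1), hp.2, mem_Ioi.1 hp.1]
  by_cases h : p ∈ Ioo 0 R ×ˢ Ioo (-π) π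
  · rw [indicator_of_mem h, smul_eq_mul, indicator_of_mem (hmem.2 h)]
  · rw [indicator_of_notMem h, smul_eq_mul, indicator_of_notMem (mt hmem.1 h), mul_zero]

theorem lintegral_ball_eq_lintegral_circleAverage {g : ℂ → ℝ} {c : ℂ} {R : ℝ}
    (hg : ContinuousOn g (closedBall c R)) (hg0 : ∀ w ∈ closedBall c R, 0 ≤ g w) :
    ∫⁻ w in ball c R, ENNReal.ofReal (g w)
      = ∫⁻ r in Ioo 0 R, ENNReal.ofReal (2 * π * r * circleAverage g c r) := by
  have hmaps : MapsTo (fun p => c + Complex.polarCoord.symm p) (Icc 0 R ×ˢ Icc (-π) π)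
      (closedBall c R) := by
    rintro ⟨r, θ⟩ ⟨hr, -⟩
    simp [abs_of_nonneg hr.1, hr.2]
  have hgp : ContinuousOn (fun p => g (c + Complex.polarCoord.symm p)) (Icc 0 R ×ˢ Icc (-π) π) :=
    hg.comp (continuous_const.add Complex.continuous_polarCoord_symm).continuousOn hmaps
  have hmeas : AEMeasurable (fun p : ℝ × ℝ => ENNReal.ofReal p.1 *
      ENNReal.ofReal (g (c + Complex.polarCoord.symm p)))
      ((volume.restrict (Ioo 0 R)).prod (volume.restrict (Ioo (-π) π))) := by
    rw [Measure.prod_restrict, ← Measure.volume_eq_prod]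
    refine (ENNReal.measurable_ofReal.comp measurable_fst).aemeasurable.mul ?_
    exact ENNReal.measurable_ofReal.comp_aemeasurable
      ((hgp.mono (prod_mono Ioo_subset_Icc_self Ioo_subset_Icc_self)).aemeasurable
        (measurableSet_Ioo.prod measurableSet_Ioo))
  rw [lintegral_ball_eq_setLIntegral_polarCoord, Measure.volume_eq_prod, ← Measure.prod_restrict,
    lintegral_prod _ hmeas]
  refine setLIntegral_congr_fun measurableSet_Ioo fun r hr => ?_
  have hint : IntegrableOn (fun θ => g (c + Complex.polarCoord.symm (r, θ))) (Ioo (-π) π) := by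
    refine (ContinuousOn.integrableOn_Icc ?_).mono_set Ioo_subset_Icc_self
    exact hgp.comp (by fun_prop) fun θ hθ => ⟨Ioo_subset_Icc_self hr, hθ⟩
  rw [lintegral_const_mul' _ _ ENNReal.ofReal_ne_top, ← ofReal_integral_eq_lintegral_ofReal hint,
    ← ENNReal.ofReal_mul hr.1.le, circleAverage_eq_setIntegral_polarCoord_symm]
  · congr 1
    field_simp
  · refine (ae_restrict_iff' measurableSet_Ioo).2 (ae_of_all _ fun θ hθ => hg0 _ ?_)
    exact hmaps ⟨Ioo_subset_Icc_self hr, Ioo_subset_Icc_self hθ⟩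

theorem ofReal_norm_deriv_sq_mul_pow_four_le {h : ℂ → ℂ} {c : ℂ} {R : ℝ} (hR : 0 ≤ R)
    (hd : DifferentiableOn ℂ h (closedBall c R)) :
    ENNReal.ofReal (‖deriv h c‖ ^ 2 * R ^ 4)
      ≤ ENNReal.ofReal (2 / π) * ∫⁻ w in ball c R, ENNReal.ofReal (‖h w‖ ^ 2) := by
  have hcircle : ∀ r ∈ Ioo 0 R, ENNReal.ofReal (2 * π * ‖deriv h c‖ ^ 2 * r ^ 3)
      ≤ ENNReal.ofReal (2 * π * r * circleAverage (fun w => ‖h w‖ ^ 2) c r) := by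
    intro r hr
    have hr₀ := hr.1
    have hsq := sq_mul_norm_deriv_le_circleAverage hr₀
      (hd.mono (closedBall_subset_closedBall hr.2.le))
    refine ENNReal.ofReal_le_ofReal ?_
    calc 2 * π * ‖deriv h c‖ ^ 2 * r ^ 3 = 2 * π * r * (r * ‖deriv h c‖) ^ 2 := by ring
      _ ≤ _ := by gcongr
  have hint : ∫ r in Ioo 0 R, 2 * π * ‖deriv h c‖ ^ 2 * r ^ 3
      = π / 2 * (‖deriv h c‖ ^ 2 * R ^ 4) := by
    rw [← integral_Ioc_eq_integral_Ioo, ← intervalIntegral.integral_of_le hR,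
      intervalIntegral.integral_const_mul, integral_pow]
    ring
  calc ENNReal.ofReal (‖deriv h c‖ ^ 2 * R ^ 4)
      = ENNReal.ofReal (2 / π) * ENNReal.ofReal (π / 2 * (‖deriv h c‖ ^ 2 * R ^ 4)) := by
        rw [← ENNReal.ofReal_mul (by positivity)]
        field_simp
    _ = ENNReal.ofReal (2 / π) *
        ∫⁻ r in Ioo 0 R, ENNReal.ofReal (2 * π * ‖deriv h c‖ ^ 2 * r ^ 3) := by
        rw [← hint, ofReal_integral_eq_lintegral_ofReal]
        · exact (Continuous.integrableOn_Icc (by fun_prop)).mono_set Ioo_subset_Icc_self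
        · exact (ae_restrict_iff' measurableSet_Ioo).2 (ae_of_all _ fun r hr => by
            have := hr.1; positivity)
    _ ≤ ENNReal.ofReal (2 / π) * ∫⁻ w in ball c R, ENNReal.ofReal (‖h w‖ ^ 2) := by
        rw [lintegral_ball_eq_lintegral_circleAverage (g := fun w => ‖h w‖ ^ 2)
          (hd.continuousOn.norm.pow 2) (fun w _ => by positivity)]
        gcongr 1
        exact setLIntegral_mono' measurableSet_Ioo hcircle

def diskPoissonKernel (z ζ : ℂ) : ℝ := (1 - ‖z‖ ^ 2) / ‖ζ - z‖ ^ 2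

theorem poissonInt_eq (μ : Measure ℂ) (z : ℂ) :
    poissonInt μ z = (2 * π)⁻¹ * ∫ ζ, diskPoissonKernel z ζ ∂μ := rfl

section Geometry

variable {z w : ℂ}

theorem half_one_sub_norm_le_of_dist_lt (hw : dist w z < (1 - ‖z‖) / 2) :
    (1 - ‖z‖) / 2 ≤ 1 - ‖w‖ := by
  have := norm_le_norm_add_norm_sub' w z
  rw [dist_eq_norm] at hw
  linarith

theorem one_sub_norm_le_of_dist_lt (hw : dist w z < (1 - ‖z‖) / 2) :
    1 - ‖w‖ ≤ 3 * ((1 - ‖z‖) / 2) := by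
  have := norm_le_norm_add_norm_sub' z w
  rw [dist_eq_norm, ← norm_neg, neg_sub] at hw
  linarith

theorem norm_lt_one_of_dist_lt (hw : dist w z < (1 - ‖z‖) / 2) : ‖w‖ < 1 := by
  have := half_one_sub_norm_le_of_dist_lt hw
  linarith [dist_nonneg (x := w) (y := z)]

theorem closedBall_subset_ball_one (hz : ‖z‖ < 1) :
    closedBall z ((1 - ‖z‖) / 2) ⊆ ball 0 1 := by
  intro w hw
  have := norm_le_norm_add_norm_sub' w z
  rw [mem_closedBall, dist_eq_norm] at hw
  rw [mem_ball_zero_iff]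
  linarith

end Geometry

section PoissonKernel

variable {z w ζ : ℂ}

theorem diskPoissonKernel_nonneg (hz : ‖z‖ ≤ 1) (ζ : ℂ) : 0 ≤ diskPoissonKernel z ζ := by
  have : ‖z‖ ^ 2 ≤ 1 := by nlinarith [norm_nonneg z]
  exact div_nonneg (by linarith) (by positivity)

theorem one_sub_norm_le_norm_sub (hζ : ‖ζ‖ = 1) (z : ℂ) : 1 - ‖z‖ ≤ ‖ζ - z‖ := by
  have := norm_sub_norm_le ζ z
  linarith

theorem diskPoissonKernel_le (hz : ‖z‖ < 1) (hζ : ‖ζ‖ = 1) :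
    diskPoissonKernel z ζ ≤ 2 / (1 - ‖z‖) := by
  have h₀ : 0 < 1 - ‖z‖ := by linarith
  have h₁ := one_sub_norm_le_norm_sub hζ z
  rw [diskPoissonKernel, div_le_div_iff₀ (by nlinarith) h₀]
  nlinarith [norm_nonneg z, mul_le_mul h₁ h₁ h₀.le (norm_nonneg _)]

/-- Harnack's inequality on the disc of radius `(1 - |z|) / 2` about `z`. -/
theorem diskPoissonKernel_le_nine_mul (hw : dist w z < (1 - ‖z‖) / 2) (hζ : ‖ζ‖ = 1) :
    diskPoissonKernel z ζ ≤ 9 * diskPoissonKernel w ζ := by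
  have hwz := half_one_sub_norm_le_of_dist_lt hw
  have hw1 := norm_lt_one_of_dist_lt hw
  have hz := one_sub_norm_le_norm_sub hζ z
  have hdist : ‖ζ - w‖ ≤ 3 / 2 * ‖ζ - z‖ := by
    have := norm_sub_le_norm_sub_add_norm_sub ζ z w
    rw [dist_eq_norm, ← norm_neg, neg_sub] at hw
    linarith
  have hnum : 1 - ‖z‖ ^ 2 ≤ 4 * (1 - ‖w‖ ^ 2) := by
    nlinarith [norm_nonneg z, mul_nonneg (norm_nonneg w) (sub_nonneg.2 hw1.le)]
  have hζw : 0 < ‖ζ - w‖ := by linarith [one_sub_norm_le_norm_sub hζ w]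
  have hζz : 0 < ‖ζ - z‖ := by linarith
  rw [diskPoissonKernel, diskPoissonKernel, mul_div_assoc', div_le_div_iff₀ (by positivity)
    (by positivity)]
  calc (1 - ‖z‖ ^ 2) * ‖ζ - w‖ ^ 2 ≤ (4 * (1 - ‖w‖ ^ 2)) * (3 / 2 * ‖ζ - z‖) ^ 2 :=
        mul_le_mul hnum (pow_le_pow_left₀ hζw.le hdist 2) (by positivity)
          (by nlinarith [norm_nonneg w])
    _ = 9 * (1 - ‖w‖ ^ 2) * ‖ζ - z‖ ^ 2 := by ring

variable {μ : Measure ℂ}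

theorem integrable_diskPoissonKernel [IsFiniteMeasure μ] (hμ : ∀ᵐ ζ ∂μ, ‖ζ‖ = 1) (hz : ‖z‖ < 1) :
    Integrable (diskPoissonKernel z) μ := by
  refine Integrable.mono' (integrable_const (2 / (1 - ‖z‖)))
    (by unfold diskPoissonKernel; fun_prop : Measurable _).aestronglyMeasurable ?_
  filter_upwards [hμ] with ζ hζ
  rw [Real.norm_of_nonneg (diskPoissonKernel_nonneg hz.le ζ)]
  exact diskPoissonKernel_le hz hζ

theorem poissonInt_nonneg (μ : Measure ℂ) (hz : ‖z‖ ≤ 1) : 0 ≤ poissonInt μ z :=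
  mul_nonneg (by positivity) (integral_nonneg (diskPoissonKernel_nonneg hz))

theorem poissonInt_le_nine_mul [IsFiniteMeasure μ] (hμ : ∀ᵐ ζ ∂μ, ‖ζ‖ = 1)
    (hw : dist w z < (1 - ‖z‖) / 2) : poissonInt μ z ≤ 9 * poissonInt μ w := by
  rw [poissonInt_eq, poissonInt_eq, mul_left_comm]
  refine mul_le_mul_of_nonneg_left ?_ (by positivity)
  rw [← integral_const_mul]
  refine integral_mono_of_nonneg (ae_of_all _ (diskPoissonKernel_nonneg ?_))
    ((integrable_diskPoissonKernel hμ (norm_lt_one_of_dist_lt hw)).const_mul 9) ?_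
  · linarith [dist_nonneg (x := w) (y := z)]
  · filter_upwards [hμ] with ζ hζ using diskPoissonKernel_le_nine_mul hw hζ

theorem measurable_poissonInt (μ : Measure ℂ) [SFinite μ] : Measurable (poissonInt μ) := by
  have : Measurable (Function.uncurry diskPoissonKernel) := by
    unfold Function.uncurry diskPoissonKernel; fun_prop
  exact (this.stronglyMeasurable.integral_prod_right' (ν := μ)).measurable.const_mul _

end PoissonKernel

section Weights

variable {μ : Measure ℂ} {z w : ℂ}

theorem pow_mul_poissonInt_le_of_dist_lt [IsFiniteMeasure μ] (hμ : ∀ᵐ ζ ∂μ, ‖ζ‖ = 1)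
    (hw : dist w z < (1 - ‖z‖) / 2) (m : ℕ) :
    (1 - ‖z‖ ^ 2) ^ (2 * (m + 1)) * poissonInt μ z
      ≤ 144 * 16 ^ m * ((1 - ‖z‖) / 2) ^ 2 * ((1 - ‖w‖ ^ 2) ^ (2 * m) * poissonInt μ w) := by
  have hwz := half_one_sub_norm_le_of_dist_lt hw
  have hw1 := norm_lt_one_of_dist_lt hw
  have hz1 : ‖z‖ < 1 := by linarith [dist_nonneg (x := w) (y := z)]
  have ha : 0 ≤ 1 - ‖z‖ ^ 2 := by nlinarith [norm_nonneg z]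
  have haR : 1 - ‖z‖ ^ 2 ≤ 4 * ((1 - ‖z‖) / 2) := by nlinarith [norm_nonneg z]
  have hab : 1 - ‖z‖ ^ 2 ≤ 4 * (1 - ‖w‖ ^ 2) := by
    nlinarith [norm_nonneg z, mul_nonneg (norm_nonneg w) (sub_nonneg.2 hw1.le)]
  have hP := poissonInt_le_nine_mul hμ hw
  rw [pow_mul, pow_mul]
  calc ((1 - ‖z‖ ^ 2) ^ 2) ^ (m + 1) * poissonInt μ z
      = ((1 - ‖z‖ ^ 2) ^ 2) ^ m * (1 - ‖z‖ ^ 2) ^ 2 * poissonInt μ z := by ring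
    _ ≤ ((4 * (1 - ‖w‖ ^ 2)) ^ 2) ^ m * (4 * ((1 - ‖z‖) / 2)) ^ 2 * (9 * poissonInt μ w) := by
        gcongr
        exact poissonInt_nonneg μ hz1.le
    _ = _ := by rw [mul_pow, mul_pow]; norm_num; ring

end Weights

section WhitneyKernel

/-- Integrating against this kernel averages over the disc `D(z, (1 - |z|) / 2)`; its integral
in `z` stays bounded because the discs containing `w` all have radius comparable to `1 - |w|`. -/
def whitneyKernel (z w : ℂ) : ℝ≥0∞ :=
  (ball z ((1 - ‖z‖) / 2)).indicator (fun _ => ENNReal.ofReal (((1 - ‖z‖) / 2) ^ 2)⁻¹) w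

theorem measurable_whitneyKernel : Measurable (Function.uncurry whitneyKernel) := by
  have hS : MeasurableSet {p : ℂ × ℂ | dist p.2 p.1 < (1 - ‖p.1‖) / 2} :=
    (isOpen_lt (by fun_prop) (by fun_prop)).measurableSet
  change Measurable ({p : ℂ × ℂ | dist p.2 p.1 < (1 - ‖p.1‖) / 2}.indicator
    fun p => ENNReal.ofReal (((1 - ‖p.1‖) / 2) ^ 2)⁻¹)
  exact Measurable.indicator (by fun_prop) hS

theorem whitneyKernel_le (z w : ℂ) :
    whitneyKernel z w
      ≤ (ball w (1 - ‖w‖)).indicator (fun _ => ENNReal.ofReal (9 / (1 - ‖w‖) ^ 2)) z := by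
  by_cases hw : dist w z < (1 - ‖z‖) / 2
  · have h₁ := half_one_sub_norm_le_of_dist_lt hw
    have h₂ := one_sub_norm_le_of_dist_lt hw
    have hw₀ : 0 < 1 - ‖w‖ := (dist_nonneg.trans_lt hw).trans_le h₁
    rw [whitneyKernel, indicator_of_mem (mem_ball.2 hw),
      indicator_of_mem (mem_ball.2 (by rw [dist_comm]; linarith))]
    refine ENNReal.ofReal_le_ofReal ?_
    calc (((1 - ‖z‖) / 2) ^ 2)⁻¹ ≤ (((1 - ‖w‖) / 3) ^ 2)⁻¹ :=
          inv_anti₀ (by positivity) (pow_le_pow_left₀ (by linarith) (by linarith) 2)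
      _ = 9 / (1 - ‖w‖) ^ 2 := by rw [div_pow, inv_div]; norm_num
  · rw [whitneyKernel, indicator_of_notMem (by simpa [mem_ball] using hw)]
    exact zero_le

theorem lintegral_whitneyKernel_le (w : ℂ) :
    ∫⁻ z, whitneyKernel z w ≤ ENNReal.ofReal (9 * π) := by
  refine (lintegral_mono (whitneyKernel_le · w)).trans ?_
  rw [lintegral_indicator measurableSet_ball, setLIntegral_const, Complex.volume_ball]
  rcases le_or_gt (1 - ‖w‖) 0 with hw | hw
  · simp [ENNReal.ofReal_of_nonpos hw]
  · rw [← ENNReal.ofReal_pow hw.le, ← NNReal.coe_real_pi, ← ENNReal.ofReal_coe_nnreal,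
      ← ENNReal.ofReal_mul (by positivity), ← ENNReal.ofReal_mul (by positivity),
      NNReal.coe_real_pi]
    exact le_of_eq (congrArg _ (by field_simp))

end WhitneyKernel

section WeightedIntegral

variable {μ : Measure ℂ} {h : ℂ → ℂ}

def poissonWeightedSq (μ : Measure ℂ) (m : ℕ) (h : ℂ → ℂ) (z : ℂ) : ℝ≥0∞ :=
  ENNReal.ofReal (‖h z‖ ^ 2 * (1 - ‖z‖ ^ 2) ^ (2 * m) * poissonInt μ z)

theorem ofReal_sq_mul_le_whitneyKernel_mul [IsFiniteMeasure μ] (hμ : ∀ᵐ ζ ∂μ, ‖ζ‖ = 1)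
    (m : ℕ) {z w : ℂ} (hw : dist w z < (1 - ‖z‖) / 2) :
    ENNReal.ofReal (‖h w‖ ^ 2) *
        ENNReal.ofReal ((1 - ‖z‖ ^ 2) ^ (2 * (m + 1)) * poissonInt μ z / ((1 - ‖z‖) / 2) ^ 4)
      ≤ ENNReal.ofReal (144 * 16 ^ m) * (whitneyKernel z w * poissonWeightedSq μ m h w) := by
  rw [whitneyKernel, indicator_of_mem (mem_ball.2 hw), poissonWeightedSq,
    ← ENNReal.ofReal_mul (by positivity),
    ← ENNReal.ofReal_mul (by positivity), ← ENNReal.ofReal_mul (by positivity)]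
  refine ENNReal.ofReal_le_ofReal ?_
  calc ‖h w‖ ^ 2 * ((1 - ‖z‖ ^ 2) ^ (2 * (m + 1)) * poissonInt μ z / ((1 - ‖z‖) / 2) ^ 4)
      ≤ ‖h w‖ ^ 2 * (144 * 16 ^ m * ((1 - ‖z‖) / 2) ^ 2 *
          ((1 - ‖w‖ ^ 2) ^ (2 * m) * poissonInt μ w) / ((1 - ‖z‖) / 2) ^ 4) := by
        have := pow_mul_poissonInt_le_of_dist_lt hμ hw m
        gcongr
    _ = _ := by
        have : 0 < (1 - ‖z‖) / 2 := dist_nonneg.trans_lt hw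
        field_simp

theorem poissonWeightedSq_deriv_le [IsFiniteMeasure μ] (hμ : ∀ᵐ ζ ∂μ, ‖ζ‖ = 1)
    (hd : DifferentiableOn ℂ h (ball 0 1)) (m : ℕ) {z : ℂ} (hz : ‖z‖ < 1) :
    poissonWeightedSq μ (m + 1) (deriv h) z
      ≤ ENNReal.ofReal (288 * 16 ^ m / π) *
        ∫⁻ w in ball 0 1, whitneyKernel z w * poissonWeightedSq μ m h w := by
  set R := (1 - ‖z‖) / 2
  have hR : 0 < R := half_pos (sub_pos.2 hz)
  set W := (1 - ‖z‖ ^ 2) ^ (2 * (m + 1)) * poissonInt μ z with hW_def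
  have hlocal := ofReal_norm_deriv_sq_mul_pow_four_le hR.le
    (hd.mono (closedBall_subset_ball_one hz))
  calc poissonWeightedSq μ (m + 1) (deriv h) z
      = ENNReal.ofReal (‖deriv h z‖ ^ 2 * R ^ 4) * ENNReal.ofReal (W / R ^ 4) := by
        rw [poissonWeightedSq, ← ENNReal.ofReal_mul (by positivity)]
        congr 1
        field_simp
        rw [hW_def, mul_assoc]
    _ ≤ ENNReal.ofReal (2 / π) * (∫⁻ w in ball z R, ENNReal.ofReal (‖h w‖ ^ 2)) *
        ENNReal.ofReal (W / R ^ 4) := mul_le_mul_left hlocal _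
    _ = ENNReal.ofReal (2 / π) *
        ∫⁻ w in ball z R, ENNReal.ofReal (‖h w‖ ^ 2) * ENNReal.ofReal (W / R ^ 4) := by
        rw [mul_assoc, lintegral_mul_const' _ _ ENNReal.ofReal_ne_top]
    _ ≤ ENNReal.ofReal (2 / π) * ∫⁻ w in ball z R,
        ENNReal.ofReal (144 * 16 ^ m) * (whitneyKernel z w * poissonWeightedSq μ m h w) := by
        gcongr 1
        exact setLIntegral_mono' measurableSet_ball fun w hw =>
          ofReal_sq_mul_le_whitneyKernel_mul hμ m hw
    _ ≤ ENNReal.ofReal (2 / π) * ∫⁻ w in ball 0 1,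
        ENNReal.ofReal (144 * 16 ^ m) * (whitneyKernel z w * poissonWeightedSq μ m h w) := by
        gcongr 1
        exact lintegral_mono_set (ball_subset_closedBall.trans (closedBall_subset_ball_one hz))
    _ = _ := by
        rw [lintegral_const_mul' _ _ ENNReal.ofReal_ne_top, ← mul_assoc,
          ← ENNReal.ofReal_mul (by positivity)]
        congr 2
        ring

theorem lintegral_poissonWeightedSq_deriv_le [IsFiniteMeasure μ] (hμ : ∀ᵐ ζ ∂μ, ‖ζ‖ = 1)
    (hd : DifferentiableOn ℂ h (ball 0 1)) (m : ℕ) :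
    ∫⁻ z in ball 0 1, poissonWeightedSq μ (m + 1) (deriv h) z
      ≤ ENNReal.ofReal (2592 * 16 ^ m) * ∫⁻ z in ball 0 1, poissonWeightedSq μ m h z := by
  have hG : AEMeasurable (poissonWeightedSq μ m h) (volume.restrict (ball 0 1)) := by
    refine ENNReal.measurable_ofReal.comp_aemeasurable ?_
    exact (((hd.continuousOn.norm.pow 2).aemeasurable measurableSet_ball).mul (by fun_prop)).mul
      (measurable_poissonInt μ).aemeasurable
  have hprod : AEMeasurable
      (Function.uncurry fun z w => whitneyKernel z w * poissonWeightedSq μ m h w)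
      ((volume.restrict (ball 0 1)).prod (volume.restrict (ball 0 1))) :=
    measurable_whitneyKernel.aemeasurable.mul hG.comp_snd
  set c := ENNReal.ofReal (288 * 16 ^ m / π)
  calc ∫⁻ z in ball 0 1, poissonWeightedSq μ (m + 1) (deriv h) z
      ≤ ∫⁻ z in ball 0 1, c * ∫⁻ w in ball 0 1, whitneyKernel z w * poissonWeightedSq μ m h w :=
        setLIntegral_mono' measurableSet_ball fun z hz =>
          poissonWeightedSq_deriv_le hμ hd m (mem_ball_zero_iff.1 hz)
    _ = c * ∫⁻ w in ball 0 1, poissonWeightedSq μ m h w * ∫⁻ z in ball 0 1, whitneyKernel z w := by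
        rw [lintegral_const_mul' _ _ ENNReal.ofReal_ne_top, lintegral_lintegral_swap hprod]
        refine congrArg (c * ·) (lintegral_congr fun w => ?_)
        simp_rw [mul_comm (whitneyKernel _ w)]
        exact lintegral_const_mul' _ _ ENNReal.ofReal_ne_top
    _ ≤ c * ∫⁻ w in ball 0 1, poissonWeightedSq μ m h w * ENNReal.ofReal (9 * π) := by
        gcongr with w
        exact (setLIntegral_le_lintegral _ _).trans (lintegral_whitneyKernel_le w)
    _ = _ := by
        rw [lintegral_mul_const' _ _ ENNReal.ofReal_ne_top, mul_comm _ (ENNReal.ofReal _),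
          ← mul_assoc, ← ENNReal.ofReal_mul (by positivity)]
        congr 2
        field_simp
        ring

end WeightedIntegral

theorem stmt11 (n : ℕ) :
    ∃ C : ℝ, 0 < C ∧
      ∀ μ : Measure ℂ, IsFiniteMeasure μ → μ ((Metric.sphere (0:ℂ) 1)ᶜ) = 0 →
      ∀ f : ℂ → ℂ, DifferentiableOn ℂ f (Metric.ball (0:ℂ) 1) →
        (∫⁻ z in Metric.ball (0:ℂ) 1,
            ENNReal.ofReal (‖iteratedDeriv (n + 1) f z‖ ^ 2 * (1 - ‖z‖ ^ 2) ^ (2 * n)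
              * poissonInt μ z))
          ≤ ENNReal.ofReal C *
            ∫⁻ z in Metric.ball (0:ℂ) 1,
              ENNReal.ofReal (‖deriv f z‖ ^ 2 * poissonInt μ z) := by
  induction n with
  | zero => exact ⟨1, one_pos, fun μ _ _ f _ => by simp [iteratedDeriv_one]⟩
  | succ n ih =>
    obtain ⟨C, hC, hle⟩ := ih
    refine ⟨2592 * 16 ^ n * C, by positivity, fun μ hfin hsphere f hf => ?_⟩
    have hμ : ∀ᵐ ζ ∂μ, ‖ζ‖ = 1 :=
      (measure_eq_zero_iff_ae_notMem.1 hsphere).mono fun ζ hζ => by simpa using hζ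
    have hd : DifferentiableOn ℂ (iteratedDeriv (n + 1) f) (ball 0 1) := by
      rw [iteratedDeriv_eq_iterate]
      exact ((hf.analyticOnNhd isOpen_ball).iterated_deriv (n + 1)).differentiableOn
    rw [iteratedDeriv_succ (n := n + 1), ENNReal.ofReal_mul (by positivity), mul_assoc]
    exact (lintegral_poissonWeightedSq_deriv_le hμ hd n).trans
      (mul_le_mul_right (hle μ hfin hsphere f hf) _)
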